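/- In M₀, for all a, m, n ≥ 0 one has i^(m+a) j^(m+a+1) · i^m j^(m+1) = i^(m+⌊a/2⌋) j^(m+⌊a/2⌋+1) · i^(m+⌈a/2⌉) j^(m+⌈a/2⌉+1) and i^(n+1) j^n · i^(n+a+1) j^(n+a) = i^(n+⌈a/2⌉+1) j^(n+⌈a/2⌉) · i^(n+⌊a/2⌋+1) j^(n+⌊a/2⌋). -/
import Mathlib


noncomputable section

/-- The generator `i` of the free monoid on two letters. -/
def iF : FreeMonoid (Fin 2) := FreeMonoid.of 0

/-- The generator `j` of the free monoid on two letters. -/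
def jF : FreeMonoid (Fin 2) := FreeMonoid.of 1

/-- Defining relations of Reineke's composition monoid of the Kronecker quiver:
(1) `i^m j^(m+1) i^(m+1) j^(m+2) = i^(2m+1) j^(2m+3)` for all `m ≥ 0`;
(2) `i^(n+2) j^(n+1) i^(n+1) j^n = i^(2n+3) j^(2n+1)` for all `n ≥ 0`;
(3) `(ij)^m = i^m j^m` for all `m ≥ 1`. -/
inductive KroneckerMonoidRel : FreeMonoid (Fin 2) → FreeMonoid (Fin 2) → Prop
  | preproj (m : ℕ) :
      KroneckerMonoidRel
        (iF ^ m * jF ^ (m + 1) * (iF ^ (m + 1) * jF ^ (m + 2)))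
        (iF ^ (2 * m + 1) * jF ^ (2 * m + 3))
  | preinj (n : ℕ) :
      KroneckerMonoidRel
        (iF ^ (n + 2) * jF ^ (n + 1) * (iF ^ (n + 1) * jF ^ n))
        (iF ^ (2 * n + 3) * jF ^ (2 * n + 1))
  | delta (m : ℕ) (hm : 1 ≤ m) :
      KroneckerMonoidRel ((iF * jF) ^ m) (iF ^ m * jF ^ m)

/-- `M₀`, Reineke's composition monoid of the Kronecker quiver, presented by
generators `i, j` and the relations above. -/
abbrev M0 : Type := (conGen KroneckerMonoidRel).Quotient

/-- The generator `i` of `M₀`. -/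
def iM : M0 := (iF : M0)

/-- The generator `j` of `M₀`. -/
def jM : M0 := (jF : M0)

lemma coePow (x : FreeMonoid (Fin 2)) (n : ℕ) :
    ((x ^ n : FreeMonoid (Fin 2)) : M0) = (x : M0) ^ n := by
  induction n with
  | zero => simp [Con.coe_one]
  | succ k ih => rw [pow_succ, Con.coe_mul, ih, pow_succ]

/-- The defining relations hold in the quotient. -/
lemma krel_eq {x y : FreeMonoid (Fin 2)} (h : KroneckerMonoidRel x y) :
    (x : M0) = (y : M0) :=
  (Con.eq _).mpr (ConGen.Rel.of x y h)

/-- Relation (3) in `M₀`, for all `m`. -/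
lemma r3M (m : ℕ) : (iM * jM) ^ m = iM ^ m * jM ^ m := by
  cases m with
  | zero => simp
  | succ k =>
    have h := krel_eq (KroneckerMonoidRel.delta (k + 1) (Nat.succ_le_succ (Nat.zero_le _)))
    simpa only [iM, jM, Con.coe_mul, coePow] using h

/-- Relation (1) in `M₀`. -/
lemma r1M (m : ℕ) :
    iM ^ m * jM ^ (m + 1) * (iM ^ (m + 1) * jM ^ (m + 2))
      = iM ^ (2 * m + 1) * jM ^ (2 * m + 3) := by
  have h := krel_eq (KroneckerMonoidRel.preproj m)
  simpa only [iM, jM, Con.coe_mul, coePow] using h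

/-- Relation (2) in `M₀`. -/
lemma r2M (n : ℕ) :
    iM ^ (n + 2) * jM ^ (n + 1) * (iM ^ (n + 1) * jM ^ n)
      = iM ^ (2 * n + 3) * jM ^ (2 * n + 1) := by
  have h := krel_eq (KroneckerMonoidRel.preinj n)
  simpa only [iM, jM, Con.coe_mul, coePow] using h

lemma hP (k : ℕ) : iM ^ k * jM ^ (k + 1) = (iM * jM) ^ k * jM := by
  rw [pow_succ, ← mul_assoc, ← r3M]

lemma hI (k : ℕ) : iM ^ (k + 1) * jM ^ k = iM * (iM * jM) ^ k := by
  rw [pow_succ', mul_assoc, ← r3M]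

lemma hPQ (p q : ℕ) : iM ^ p * jM ^ (p + q) = (iM * jM) ^ p * jM ^ q := by
  rw [pow_add, ← mul_assoc, ← r3M]

lemma hIQ (p q : ℕ) : iM ^ (p + q) * jM ^ q = iM ^ p * (iM * jM) ^ q := by
  rw [pow_add, mul_assoc, ← r3M]

/-- Flattening of products of "preprojective" words: for `c ≤ b + 1`,
`i^b j^(b+1) · i^c j^(c+1) = i^(b+c) j^(b+c+2)` in `M₀`. -/
lemma flatP (b c : ℕ) (h : c ≤ b + 1) :
    (iM ^ b * jM ^ (b + 1)) * (iM ^ c * jM ^ (c + 1))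
      = iM ^ (b + c) * jM ^ (b + c + 2) := by
  cases c with
  | zero =>
    simp only [pow_zero, one_mul, Nat.add_zero, Nat.zero_add, pow_one, mul_assoc, ← pow_succ]
  | succ k =>
    obtain ⟨t, rfl⟩ : ∃ t, b = k + t := ⟨b - k, by omega⟩
    calc (iM ^ (k + t) * jM ^ (k + t + 1)) * (iM ^ (k + 1) * jM ^ (k + 2))
        = ((iM * jM) ^ t * (iM ^ k * jM ^ (k + 1))) * (iM ^ (k + 1) * jM ^ (k + 2)) := by
          rw [hP (k + t), hP k, Nat.add_comm k t]
          simp only [pow_add, mul_assoc]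
      _ = (iM * jM) ^ t * (iM ^ k * jM ^ (k + 1) * (iM ^ (k + 1) * jM ^ (k + 2))) := by
          rw [mul_assoc]
      _ = (iM * jM) ^ t * (iM ^ (2 * k + 1) * jM ^ (2 * k + 3)) := by rw [r1M k]
      _ = (iM * jM) ^ t * ((iM * jM) ^ (2 * k + 1) * jM ^ 2) := by
          rw [show 2 * k + 3 = (2 * k + 1) + 2 from rfl, hPQ]
      _ = (iM * jM) ^ (t + (2 * k + 1)) * jM ^ 2 := by
          simp only [pow_add, pow_one, mul_assoc]
      _ = iM ^ (k + t + (k + 1)) * jM ^ (k + t + (k + 1) + 2) := by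
          rw [show k + t + (k + 1) + 2 = (k + t + (k + 1)) + 2 from rfl, hPQ,
            show k + t + (k + 1) = t + (2 * k + 1) by omega]

/-- Flattening of products of "preinjective" words: for `n ≤ n' + 1`,
`i^(n+1) j^n · i^(n'+1) j^n' = i^(n+n'+2) j^(n+n')` in `M₀`. -/
lemma flatI (n n' : ℕ) (h : n ≤ n' + 1) :
    (iM ^ (n + 1) * jM ^ n) * (iM ^ (n' + 1) * jM ^ n')
      = iM ^ (n + n' + 2) * jM ^ (n + n') := by
  cases n with
  | zero =>
    simp only [Nat.zero_add, pow_zero, mul_one, pow_one]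
    rw [← mul_assoc, ← pow_succ']
  | succ k =>
    obtain ⟨t, rfl⟩ : ∃ t, n' = k + t := ⟨n' - k, by omega⟩
    calc (iM ^ (k + 1 + 1) * jM ^ (k + 1)) * (iM ^ (k + t + 1) * jM ^ (k + t))
        = (iM ^ (k + 1 + 1) * jM ^ (k + 1)) * ((iM ^ (k + 1) * jM ^ k) * (iM * jM) ^ t) := by
          rw [hI (k + t), hI k]
          simp only [pow_add, pow_one, mul_assoc]
      _ = (iM ^ (k + 1 + 1) * jM ^ (k + 1) * (iM ^ (k + 1) * jM ^ k)) * (iM * jM) ^ t := by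
          simp only [mul_assoc]
      _ = (iM ^ (2 * k + 3) * jM ^ (2 * k + 1)) * (iM * jM) ^ t := by
          rw [show k + 1 + 1 = k + 2 from rfl, r2M k]
      _ = iM ^ 2 * ((iM * jM) ^ (2 * k + 1) * (iM * jM) ^ t) := by
          rw [show 2 * k + 3 = 2 + (2 * k + 1) from by omega, hIQ, mul_assoc]
      _ = iM ^ (k + 1 + (k + t) + 2) * jM ^ (k + 1 + (k + t)) := by
          rw [← pow_add, show k + 1 + (k + t) + 2 = 2 + (k + 1 + (k + t)) from by omega, hIQ,
            show k + 1 + (k + t) = 2 * k + 1 + t from by omega]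

/-- In `M₀`, for all `a, m, n ≥ 0`,
`i^(m+a) j^(m+a+1) · i^m j^(m+1) = i^(m+⌊a/2⌋) j^(m+⌊a/2⌋+1) · i^(m+⌈a/2⌉) j^(m+⌈a/2⌉+1)`
and
`i^(n+1) j^n · i^(n+a+1) j^(n+a) = i^(n+⌈a/2⌉+1) j^(n+⌈a/2⌉) i^(n+⌊a/2⌋+1) j^(n+⌊a/2⌋)`. -/
theorem preprojective_preinjective_monoid_relations (a m n : ℕ) :
    (iM ^ (m + a) * jM ^ (m + a + 1)) * (iM ^ m * jM ^ (m + 1))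
      = (iM ^ (m + a / 2) * jM ^ (m + a / 2 + 1)) *
          (iM ^ (m + (a + 1) / 2) * jM ^ (m + (a + 1) / 2 + 1)) ∧
    (iM ^ (n + 1) * jM ^ n) * (iM ^ (n + a + 1) * jM ^ (n + a))
      = (iM ^ (n + (a + 1) / 2 + 1) * jM ^ (n + (a + 1) / 2)) *
          (iM ^ (n + a / 2 + 1) * jM ^ (n + a / 2)) := by
  constructor
  · rw [flatP (m + a) m (by omega), flatP (m + a / 2) (m + (a + 1) / 2) (by omega),
      show m + a + m = m + a / 2 + (m + (a + 1) / 2) from by omega]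
  · rw [flatI n (n + a) (by omega), flatI (n + (a + 1) / 2) (n + a / 2) (by omega),
      show n + (n + a) = n + (a + 1) / 2 + (n + a / 2) from by omega]
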